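/- Let 𝒫 := {j ∈ {1,…,κ} : |ℛ_j| ≥ K + ⌊(L−K)/2⌋}. Then for every ζ ∈ 𝒫 there exists i ∈ {1,…,N} such that ζ = (1)_i, or γ_ζ ∈ I_{(1)_i}, or γ_{(1)_i} ∈ I_ζ; that is, every index in 𝒫 is consecutive (in the sense that one of the two residues lies in the other's interval) to the index (1)_i of the good common residue of X_i with the smallest good error, for some i. -/
import Mathlib


/-- `rmod Γ x` is the representative of `x` modulo `Γ` in `[0, Γ)` (for `Γ > 0`). -/
noncomputable def rmod (Γ x : ℝ) : ℝ := x - Γ * (⌊x / Γ⌋ : ℝ)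

lemma rmod_nonneg {Γ : ℝ} (hΓ : 0 < Γ) (x : ℝ) : 0 ≤ rmod Γ x := by
  have h := Int.floor_le (x / Γ)
  have h2 : Γ * ((⌊x / Γ⌋ : ℝ)) ≤ Γ * (x / Γ) := by
    exact mul_le_mul_of_nonneg_left h hΓ.le
  have h3 : Γ * (x / Γ) = x := by field_simp
  unfold rmod; linarith

lemma rmod_lt {Γ : ℝ} (hΓ : 0 < Γ) (x : ℝ) : rmod Γ x < Γ := by
  have h := Int.lt_floor_add_one (x / Γ)
  have h2 : Γ * (x / Γ) < Γ * ((⌊x / Γ⌋ : ℝ) + 1) := by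
    exact mul_lt_mul_of_pos_left h hΓ
  have h3 : Γ * (x / Γ) = x := by field_simp
  unfold rmod; nlinarith

lemma rmod_eq_self {Γ x : ℝ} (hΓ : 0 < Γ) (h0 : 0 ≤ x) (h1 : x < Γ) : rmod Γ x = x := by
  have hfl : ⌊x / Γ⌋ = 0 := by
    apply Int.floor_eq_zero_iff.2
    constructor
    · exact div_nonneg h0 hΓ.le
    · rw [div_lt_one hΓ] at *; simpa using h1
  unfold rmod; rw [hfl]; simp

lemma rmod_intmul {Γ : ℝ} (hΓ : 0 < Γ) (x : ℝ) (k : ℤ) :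
    rmod Γ (x + k * Γ) = rmod Γ x := by
  have hd : (x + k * Γ) / Γ = x / Γ + k := by field_simp
  unfold rmod
  rw [hd, Int.floor_add_intCast]
  push_cast; ring

lemma rmod_eq_add {Γ x : ℝ} (hΓ : 0 < Γ) (h0 : -Γ ≤ x) (h1 : x < 0) :
    rmod Γ x = x + Γ := by
  have : rmod Γ x = rmod Γ ((x + Γ) + (-1 : ℤ) * Γ) := by norm_num
  rw [this, rmod_intmul hΓ, rmod_eq_self hΓ (by linarith) (by linarith)]

lemma rmod_eq_sub {Γ x : ℝ} (hΓ : 0 < Γ) (h0 : Γ ≤ x) (h1 : x < 2 * Γ) :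
    rmod Γ x = x - Γ := by
  have : rmod Γ x = rmod Γ ((x - Γ) + (1 : ℤ) * Γ) := by norm_num
  rw [this, rmod_intmul hΓ, rmod_eq_self hΓ (by linarith) (by linarith)]

lemma main_aux (Γ δ s g d e : ℝ) (hΓ4 : 4 * δ ≤ Γ) (hδ : 0 < δ)
    (hs0 : 0 ≤ s) (hs1 : s < Γ) (hg0 : 0 ≤ g) (hg1 : g < Γ)
    (hd0 : 0 ≤ d) (hd2 : d < 2 * δ)
    (he : e = rmod Γ (d - (s - g))) (he0 : 0 < e) (he2 : e ≤ 2 * δ) :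
    s = g ∨ (0 < rmod Γ (s - g) ∧ rmod Γ (s - g) ≤ 2 * δ) ∨
      (0 < rmod Γ (g - s) ∧ rmod Γ (g - s) ≤ 2 * δ) := by
  have hΓpos : 0 < Γ := by linarith
  rcases lt_trichotomy (s - g) 0 with h | h | h
  · -- u < 0
    by_cases h2 : g - s ≤ 2 * δ
    · right; right
      rw [rmod_eq_self hΓpos (by linarith) (by linarith)]
      exact ⟨by linarith, h2⟩
    · push_neg at h2
      by_cases h3 : d - (s - g) < Γ
      · exfalso
        rw [rmod_eq_self hΓpos (by linarith) h3] at he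
        linarith
      · push_neg at h3
        rw [rmod_eq_sub hΓpos h3 (by linarith)] at he
        right; left
        rw [rmod_eq_add hΓpos (by linarith) h]
        constructor <;> linarith
  · left; linarith
  · -- u > 0
    by_cases h2 : s - g ≤ 2 * δ
    · right; left
      rw [rmod_eq_self hΓpos (by linarith) (by linarith)]
      exact ⟨h, h2⟩
    · push_neg at h2
      rw [rmod_eq_add hΓpos (by linarith) (by linarith)] at he
      right; right
      rw [rmod_eq_add hΓpos (by linarith) (by linarith)]
      constructor <;> linarith

/-- Every index `ζ` whose interval `I_ζ` holds at least `K + ⌊(L-K)/2⌋` labels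
is consecutive to the index `(1)_i` of the good common residue of `X_i` with
the smallest good error, for some `i`: either `ζ = (1)_i`, or `γ_ζ ∈ I_{(1)_i}`,
or `γ_{(1)_i} ∈ I_ζ`. -/
theorem populous_intervals_consecutive_to_first_indices
    (N L K : ℕ) (hN : 1 ≤ N) (hK : 1 ≤ K) (hKL : K ≤ L)
    (δ : ℝ) (hδ : 0 < δ) (Γ : ℝ) (hΓ : Γ = 4 * N * δ)
    (G B : Finset (Fin L)) (hGB : G ∪ B = Finset.univ) (hGBdisj : Disjoint G B)
    (hB : B.card ≤ (L - K) / 2)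
    (rc : Fin N → ℝ) (hrc : ∀ i, 0 ≤ rc i ∧ rc i < Γ)
    (Δ : Fin N → Fin L → ℝ) (hΔ : ∀ i, ∀ l ∈ G, |Δ i l| < δ)
    (hΔdist : ∀ i, ∀ l ∈ G, ∀ l' ∈ G, Δ i l = Δ i l' → l = l')
    (tilde : Fin N → Fin L → ℝ)
    (htilde : ∀ i l, tilde i l = rmod Γ (rc i + Δ i l))
    (hinj : Function.Injective (fun p : Fin N × Fin L => tilde p.1 p.2))
    (γ : Fin (N * L) → ℝ) (hγmono : StrictMono γ)
    (hγrange : ∀ j, ∃ i l, γ j = tilde i l)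
    (lbl : Fin (N * L) → Fin L) (hlbl : ∀ j, ∃ i, γ j = tilde i (lbl j))
    (R : Fin (N * L) → Finset (Fin L))
    (hR : ∀ j l, l ∈ R j ↔
      ∃ i, 0 < rmod Γ (tilde i l - γ j) ∧ rmod Γ (tilde i l - γ j) ≤ 2 * δ)
    (first : Fin N → Fin (N * L))
    (hfirst : ∀ i, ∃ l ∈ G, γ (first i) = tilde i l ∧ ∀ l' ∈ G, Δ i l ≤ Δ i l') :
    ∀ ζ : Fin (N * L), K + (L - K) / 2 ≤ (R ζ).card →
      ∃ i : Fin N, ζ = first i ∨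
        (0 < rmod Γ (γ ζ - γ (first i)) ∧ rmod Γ (γ ζ - γ (first i)) ≤ 2 * δ) ∨
        (0 < rmod Γ (γ (first i) - γ ζ) ∧ rmod Γ (γ (first i) - γ ζ) ≤ 2 * δ) := by
  intro ζ hcard
  have hN1 : (1 : ℝ) ≤ (N : ℝ) := by exact_mod_cast hN
  have hΓ4 : 4 * δ ≤ Γ := by rw [hΓ]; nlinarith
  have hΓpos : 0 < Γ := by linarith
  -- there is a good label in R ζ
  have hex : ∃ l ∈ G, l ∈ R ζ := by
    by_contra h
    push_neg at h
    have hsub : R ζ ⊆ B := by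
      intro l hl
      have hl2 : l ∈ G ∪ B := by rw [hGB]; exact Finset.mem_univ l
      rcases Finset.mem_union.1 hl2 with h1 | h1
      · exact absurd hl (h l h1)
      · exact h1
    have := Finset.card_le_card hsub
    omega
  obtain ⟨l, hlG, hlR⟩ := hex
  obtain ⟨i, he0, he2⟩ := (hR ζ l).1 hlR
  refine ⟨i, ?_⟩
  obtain ⟨l0, hl0G, hgval, hmin⟩ := hfirst i
  -- bounds for γ ζ and γ (first i)
  obtain ⟨i', l', hsval⟩ := hγrange ζ
  have hs0 : 0 ≤ γ ζ := by rw [hsval, htilde]; exact rmod_nonneg hΓpos _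
  have hs1 : γ ζ < Γ := by rw [hsval, htilde]; exact rmod_lt hΓpos _
  have hg0 : 0 ≤ γ (first i) := by rw [hgval, htilde]; exact rmod_nonneg hΓpos _
  have hg1 : γ (first i) < Γ := by rw [hgval, htilde]; exact rmod_lt hΓpos _
  have hd0 : 0 ≤ Δ i l - Δ i l0 := sub_nonneg.2 (hmin l hlG)
  have habs1 := abs_lt.1 (hΔ i l hlG)
  have habs2 := abs_lt.1 (hΔ i l0 hl0G)
  have hd2 : Δ i l - Δ i l0 < 2 * δ := by linarith [habs1.1, habs1.2, habs2.1, habs2.2]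
  -- rewrite e
  have h1 : rmod Γ (tilde i l - γ ζ) = rmod Γ (rc i + Δ i l - γ ζ) := by
    rw [htilde]
    have heq : rmod Γ (rc i + Δ i l) - γ ζ =
        (rc i + Δ i l - γ ζ) + ((-⌊(rc i + Δ i l) / Γ⌋ : ℤ)) * Γ := by
      unfold rmod; push_cast; ring
    rw [heq, rmod_intmul hΓpos]
  have h2 : rmod Γ ((Δ i l - Δ i l0) - (γ ζ - γ (first i))) =
      rmod Γ (rc i + Δ i l - γ ζ) := by
    rw [hgval, htilde]
    have heq : (Δ i l - Δ i l0) - (γ ζ - rmod Γ (rc i + Δ i l0)) =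
        (rc i + Δ i l - γ ζ) + ((-⌊(rc i + Δ i l0) / Γ⌋ : ℤ)) * Γ := by
      unfold rmod; push_cast; ring
    rw [heq, rmod_intmul hΓpos]
  have hekey : rmod Γ (tilde i l - γ ζ) =
      rmod Γ ((Δ i l - Δ i l0) - (γ ζ - γ (first i))) := by rw [h1, h2]
  rw [hekey] at he0 he2
  have := main_aux Γ δ (γ ζ) (γ (first i)) (Δ i l - Δ i l0)
    (rmod Γ ((Δ i l - Δ i l0) - (γ ζ - γ (first i))))
    hΓ4 hδ hs0 hs1 hg0 hg1 hd0 hd2 rfl he0 he2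
  rcases this with h | h | h
  · left; exact hγmono.injective h
  · right; left; exact h
  · right; right; exact h
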